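/- arXiv:2403.19483 — 2 statements merged into one kernel-verified Lean document; each statement's English description precedes it below -/
import Mathlib

section
/- Trapping sequences for φ_μ (Lemma 3.1(d)): For every μ ∈ (1, e²) and every ε ∈ (0, θ_μ) there exist a strictly increasing sequence (α_m)_{m≥1} with 0 < α_1 ≤ ε and α_m ↑ θ_μ, and a strictly decreasing sequence (β_m)_{m≥1} with β_1 > 1/e and β_m ↓ θ_μ, such that φ_μ([α_m, β_m]) ⊆ (α_{m+1}, β_{m+1}) for all m ≥ 1. -/
open Filter

/-- `φ_μ(w) = μ w e^{-μ w}`. -/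
noncomputable def phi (μ w : ℝ) : ℝ := μ * w * Real.exp (-(μ * w))

/-- `θ_μ = μ⁻¹ log μ`. -/
noncomputable def theta (μ : ℝ) : ℝ := Real.log μ / μ

section AuxLemmas

open Real

lemma aux_key {r : ℝ} (hr : r < 2) {t : ℝ} (ht : 0 < t) :
    r - t < (r + t) * Real.exp (-t) := by
  set g : ℝ → ℝ := fun t => (r + t) * Real.exp (-t) + (t - r) with hg
  have hd : ∀ x : ℝ, HasDerivAt g ((1 * Real.exp (-x) + (r + x) * (-Real.exp (-x))) + 1) x := by
    intro x
    have h1 : HasDerivAt (fun t : ℝ => r + t) 1 x := (hasDerivAt_id x).const_add r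
    have h2 : HasDerivAt (fun t : ℝ => Real.exp (-t)) (-Real.exp (-x)) x := by
      simpa [Function.comp_def] using (Real.hasDerivAt_exp (-x)).comp x (hasDerivAt_neg x)
    exact (h1.mul h2).add ((hasDerivAt_id x).sub_const r)
  have hdpos : ∀ x ∈ interior (Set.Ici (0:ℝ)),
      0 < deriv g x := by
    intro x hx
    rw [interior_Ici] at hx
    rw [(hd x).deriv]
    rcases le_or_gt (r + x - 1) 0 with h | h
    · nlinarith [Real.exp_pos (-x)]
    · have h1 : r + x - 1 < Real.exp x := by
        have := Real.add_one_le_exp x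
        linarith
      have h2 : (r + x - 1) * Real.exp (-x) < Real.exp x * Real.exp (-x) :=
        mul_lt_mul_of_pos_right h1 (Real.exp_pos _)
      rw [← Real.exp_add] at h2
      simp at h2
      nlinarith
  have hmono : StrictMonoOn g (Set.Ici (0:ℝ)) :=
    strictMonoOn_of_deriv_pos (convex_Ici 0)
      (fun x _ => (hd x).differentiableAt.continuousAt.continuousWithinAt) hdpos
  have h0 : g 0 = 0 := by simp [hg]
  have := hmono (Set.self_mem_Ici) (Set.mem_Ici.mpr ht.le) ht
  rw [h0] at this
  simp only [hg] at this
  linarith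

section
variable {μ : ℝ} (hμ1 : 1 < μ)
include hμ1

lemma phi_pos {w : ℝ} (hw : 0 < w) : 0 < phi μ w := by
  have hμ0 : (0:ℝ) < μ := lt_trans one_pos hμ1
  unfold phi
  positivity

lemma phi_theta : phi μ (theta μ) = theta μ := by
  have hμ0 : (0:ℝ) < μ := lt_trans one_pos hμ1
  have h1 : μ * (Real.log μ / μ) = Real.log μ := by field_simp
  rw [phi, theta, h1, Real.exp_neg, Real.exp_log hμ0, ← div_eq_mul_inv]

lemma lt_phi {w : ℝ} (hw : 0 < w) (hwθ : w < theta μ) : w < phi μ w := by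
  have hμ0 : (0:ℝ) < μ := lt_trans one_pos hμ1
  have hlt : μ * w < Real.log μ := by
    rw [theta, lt_div_iff₀ hμ0] at hwθ; linarith
  have hinv : μ⁻¹ = Real.exp (-Real.log μ) := by
    rw [Real.exp_neg, Real.exp_log hμ0]
  have h : μ⁻¹ < Real.exp (-(μ * w)) := by
    rw [hinv]
    exact Real.exp_lt_exp.mpr (by linarith)
  have hmw : 0 < μ * w := by positivity
  have h2 := mul_lt_mul_of_pos_left h hmw
  have hxw : μ * w * μ⁻¹ = w := by field_simp
  rw [hxw] at h2
  exact h2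

lemma phi_lt {w : ℝ} (hθ0 : 0 < theta μ) (hwθ : theta μ < w) : phi μ w < w := by
  have hμ0 : (0:ℝ) < μ := lt_trans one_pos hμ1
  have hw : 0 < w := lt_trans hθ0 hwθ
  have hlt : Real.log μ < μ * w := by
    rw [theta, div_lt_iff₀ hμ0] at hwθ; linarith
  have hinv : μ⁻¹ = Real.exp (-Real.log μ) := by
    rw [Real.exp_neg, Real.exp_log hμ0]
  have h : Real.exp (-(μ * w)) < μ⁻¹ := by
    rw [hinv]
    exact Real.exp_lt_exp.mpr (by linarith)
  have hmw : 0 < μ * w := by positivity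
  have h2 := mul_lt_mul_of_pos_left h hmw
  have hxw : μ * w * μ⁻¹ = w := by field_simp
  rw [hxw] at h2
  exact h2

lemma phi_mono {w1 w2 : ℝ} (h0 : 0 ≤ w1) (h12 : w1 ≤ w2) (h2 : μ * w2 ≤ 1) :
    phi μ w1 ≤ phi μ w2 := by
  have hμ0 : (0:ℝ) < μ := lt_trans one_pos hμ1
  set x := μ * w1 with hx
  set y := μ * w2 with hy
  have hx0 : 0 ≤ x := by positivity
  have hxy : x ≤ y := by
    have := mul_le_mul_of_nonneg_left h12 hμ0.le; simpa [hx, hy] using this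
  have h1 : 1 + (x - y) ≤ Real.exp (x - y) := by
    have := Real.add_one_le_exp (x - y); linarith
  have key : Real.exp (x - y) * Real.exp (-x) = Real.exp (-y) := by
    rw [← Real.exp_add]; ring_nf
  have hy0 : 0 ≤ y := le_trans hx0 hxy
  have e3 : x ≤ y * (1 + (x - y)) := by nlinarith
  have e4 : x * Real.exp (-x) ≤ y * (1 + (x - y)) * Real.exp (-x) :=
    mul_le_mul_of_nonneg_right e3 (Real.exp_pos _).le
  have e5 : y * (1 + (x - y)) * Real.exp (-x) ≤ y * Real.exp (x - y) * Real.exp (-x) := by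
    have := mul_le_mul_of_nonneg_left h1 hy0
    exact mul_le_mul_of_nonneg_right this (Real.exp_pos _).le
  have e6 : y * Real.exp (x - y) * Real.exp (-x) = y * Real.exp (-y) := by
    rw [mul_assoc, key]
  show μ * w1 * Real.exp (-(μ * w1)) ≤ μ * w2 * Real.exp (-(μ * w2))
  rw [← hx, ← hy]
  linarith

lemma phi_anti {w1 w2 : ℝ} (h1w : 1 ≤ μ * w1) (h12 : w1 ≤ w2) :
    phi μ w2 ≤ phi μ w1 := by
  have hμ0 : (0:ℝ) < μ := lt_trans one_pos hμ1
  set x := μ * w1 with hx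
  set y := μ * w2 with hy
  have hxy : x ≤ y := by
    have := mul_le_mul_of_nonneg_left h12 hμ0.le; simpa [hx, hy] using this
  have hx0 : 0 ≤ x := le_trans zero_le_one h1w
  have h1 : 1 + (y - x) ≤ Real.exp (y - x) := by
    have := Real.add_one_le_exp (y - x); linarith
  have key : Real.exp (y - x) * Real.exp (-y) = Real.exp (-x) := by
    rw [← Real.exp_add]; ring_nf
  have e3 : y ≤ x * (1 + (y - x)) := by nlinarith
  have e4 : y * Real.exp (-y) ≤ x * (1 + (y - x)) * Real.exp (-y) :=
    mul_le_mul_of_nonneg_right e3 (Real.exp_pos _).le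
  have e5 : x * (1 + (y - x)) * Real.exp (-y) ≤ x * Real.exp (y - x) * Real.exp (-y) := by
    have := mul_le_mul_of_nonneg_left h1 hx0
    exact mul_le_mul_of_nonneg_right this (Real.exp_pos _).le
  have e6 : x * Real.exp (y - x) * Real.exp (-y) = x * Real.exp (-x) := by
    rw [mul_assoc, key]
  show μ * w2 * Real.exp (-(μ * w2)) ≤ μ * w1 * Real.exp (-(μ * w1))
  rw [← hx, ← hy]
  linarith

lemma min_le_phi {a b w : ℝ} (ha : 0 < a) (hw : w ∈ Set.Icc a b) :
    min (phi μ a) (phi μ b) ≤ phi μ w := by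
  obtain ⟨haw, hwb⟩ := hw
  rcases le_or_gt (μ * w) 1 with h | h
  · exact le_trans (min_le_left _ _) (phi_mono hμ1 ha.le haw h)
  · exact le_trans (min_le_right _ _) (phi_anti hμ1 h.le hwb)

lemma phi_le_clamp {a b w : ℝ} (ha : 0 < a) (hab : a ≤ b) (hw : w ∈ Set.Icc a b) :
    phi μ w ≤ phi μ (min (max μ⁻¹ a) b) := by
  have hμ0 : (0:ℝ) < μ := lt_trans one_pos hμ1
  obtain ⟨haw, hwb⟩ := hw
  set c := min (max μ⁻¹ a) b with hc
  rcases le_or_gt w c with hwc | hcw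
  · rcases le_total a μ⁻¹ with h | h
    · have hmax : max μ⁻¹ a = μ⁻¹ := max_eq_left h
      have hcμ : c ≤ μ⁻¹ := by rw [hc, hmax]; exact min_le_left _ _
      have : μ * c ≤ 1 := by
        calc μ * c ≤ μ * μ⁻¹ := mul_le_mul_of_nonneg_left hcμ hμ0.le
        _ = 1 := mul_inv_cancel₀ (ne_of_gt hμ0)
      exact phi_mono hμ1 (le_trans ha.le haw) hwc this
    · have hmax : max μ⁻¹ a = a := max_eq_right h
      have hca : c ≤ a := by rw [hc, hmax]; exact min_le_left _ _
      have : w = c := le_antisymm hwc (le_trans hca haw)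
      rw [this]
  · have hcb : c < b := lt_of_lt_of_le hcw hwb
    have hcm : c = max μ⁻¹ a := by
      rcases min_cases (max μ⁻¹ a) b with ⟨h1, _⟩ | ⟨h1, h2⟩
      · exact h1
      · exfalso; rw [hc, h1] at hcb; exact lt_irrefl b hcb
    have hc1 : 1 ≤ μ * c := by
      have : μ⁻¹ ≤ c := by rw [hcm]; exact le_max_left _ _
      calc (1:ℝ) = μ * μ⁻¹ := (mul_inv_cancel₀ (ne_of_gt hμ0)).symm
      _ ≤ μ * c := mul_le_mul_of_nonneg_left this hμ0.le
    exact phi_anti hμ1 hc1 hcw.le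

end

section
variable {μ : ℝ} (hμ1 : 1 < μ) (hμ2 : μ < Real.exp 2)
include hμ1 hμ2

lemma hlog2 : Real.log μ < 2 := by
  have hμ0 : (0:ℝ) < μ := lt_trans one_pos hμ1
  have := Real.log_lt_log hμ0 hμ2
  rwa [Real.log_exp] at this

lemma phi_lt_reflect {w : ℝ} (hw : 0 < w) (hwθ : w < theta μ) :
    phi μ w < 2 * theta μ - w := by
  have hμ0 : (0:ℝ) < μ := lt_trans one_pos hμ1
  have hr2 : Real.log μ < 2 := hlog2 hμ1 hμ2
  have hlt : μ * w < Real.log μ := by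
    rw [theta, lt_div_iff₀ hμ0] at hwθ; linarith
  have ht : 0 < Real.log μ - μ * w := by linarith
  have hk := aux_key hr2 ht
  -- hk : log μ - (log μ - μ w) < (log μ + (log μ - μ w)) * exp (-(log μ - μ w))
  have e1 : Real.exp (-(Real.log μ - μ * w)) * Real.exp (-(μ * w)) = μ⁻¹ := by
    rw [← Real.exp_add, show -(Real.log μ - μ * w) + -(μ * w) = -Real.log μ by ring,
      Real.exp_neg, Real.exp_log hμ0]
  -- multiply hk by exp(-(μ w)) > 0
  have hk2 := mul_lt_mul_of_pos_right hk (Real.exp_pos (-(μ * w)))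
  rw [mul_assoc, e1] at hk2
  -- hk2 : (log μ - (log μ - μ w)) * exp(-(μ w)) < (log μ + (log μ - μ w)) * μ⁻¹
  have hgoal : (Real.log μ + (Real.log μ - μ * w)) * μ⁻¹ = 2 * theta μ - w := by
    rw [theta]; field_simp; ring
  rw [hgoal] at hk2
  have : (Real.log μ - (Real.log μ - μ * w)) * Real.exp (-(μ * w)) = phi μ w := by
    rw [phi]; ring_nf
  linarith [this ▸ hk2]

lemma reflect_lt_phi {w : ℝ} (hθ0 : 0 < theta μ) (hwθ : theta μ < w) :
    2 * theta μ - w < phi μ w := by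
  have hμ0 : (0:ℝ) < μ := lt_trans one_pos hμ1
  have hr2 : Real.log μ < 2 := hlog2 hμ1 hμ2
  have hlt : Real.log μ < μ * w := by
    rw [theta, div_lt_iff₀ hμ0] at hwθ; linarith
  have ht : 0 < μ * w - Real.log μ := by linarith
  have hk := aux_key hr2 ht
  -- hk : log μ - (μ w - log μ) < (log μ + (μ w - log μ)) * exp (-(μ w - log μ))
  have e1 : Real.exp (-(μ * w - Real.log μ)) = μ * Real.exp (-(μ * w)) := by
    rw [show -(μ * w - Real.log μ) = Real.log μ + -(μ * w) by ring, Real.exp_add,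
      Real.exp_log hμ0]
  rw [e1] at hk
  -- hk : 2 log μ - μ w < μ w * (μ * exp (-(μ w)))
  have h2 : (2 * Real.log μ - μ * w) < μ * (phi μ w) := by
    rw [phi]; nlinarith [hk]
  rw [theta]
  have : 2 * (Real.log μ / μ) - w = (2 * Real.log μ - μ * w) / μ := by field_simp
  rw [this, div_lt_iff₀ hμ0]
  nlinarith [h2]

end

noncomputable def stepFun (μ : ℝ) (p : ℝ × ℝ) : ℝ × ℝ :=
  ((p.1 + min (min (phi μ p.1) (phi μ p.2)) (theta μ)) / 2,
   (p.2 + max (phi μ (min (max μ⁻¹ p.1) p.2)) (theta μ)) / 2)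

def TrapInv (μ : ℝ) (p : ℝ × ℝ) : Prop :=
  0 < p.1 ∧ p.1 < theta μ ∧ theta μ < p.2 ∧ p.1 < phi μ p.2 ∧
    phi μ (min (max μ⁻¹ p.1) p.2) < p.2

lemma step_lemma {μ : ℝ} (hμ1 : 1 < μ) {p : ℝ × ℝ} (h : TrapInv μ p) :
    TrapInv μ (stepFun μ p) ∧ p.1 < (stepFun μ p).1 ∧ (stepFun μ p).2 < p.2 ∧
    ∀ w ∈ Set.Icc p.1 p.2, phi μ w ∈ Set.Ioo (stepFun μ p).1 (stepFun μ p).2 := by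
  obtain ⟨ha0, haθ, hθb, haphib, hUb⟩ := h
  set a := p.1
  set b := p.2
  set θ := theta μ with hθdef
  set m3 := min (min (phi μ a) (phi μ b)) θ with hm3
  set U := phi μ (min (max μ⁻¹ a) b) with hU
  have hab : a ≤ b := le_trans haθ.le hθb.le
  have ha' : (stepFun μ p).1 = (a + m3) / 2 := rfl
  have hb' : (stepFun μ p).2 = (b + max U θ) / 2 := rfl
  have ham3 : a < m3 := lt_min (lt_min (lt_phi hμ1 ha0 haθ) haphib) haθ
  have hm3min : m3 ≤ min (phi μ a) (phi μ b) := min_le_left _ _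
  have hm3θ : m3 ≤ θ := min_le_right _ _
  have haa' : a < (stepFun μ p).1 := by rw [ha']; linarith
  have ha'm3 : (stepFun μ p).1 < m3 := by rw [ha']; linarith
  have ha'θ : (stepFun μ p).1 < θ := lt_of_lt_of_le ha'm3 hm3θ
  have hmaxb : max U θ < b := max_lt hUb hθb
  have hb'b : (stepFun μ p).2 < b := by rw [hb']; linarith
  have hb'U : U < (stepFun μ p).2 := by
    rw [hb']; have := le_max_left U θ; linarith
  have hb'θ : θ < (stepFun μ p).2 := by
    rw [hb']; have := le_max_right U θ; linarith
  have htrap : ∀ w ∈ Set.Icc a b, phi μ w ∈ Set.Ioo (stepFun μ p).1 (stepFun μ p).2 := by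
    intro w hw
    constructor
    · exact lt_of_lt_of_le (lt_of_lt_of_le ha'm3 hm3min) (min_le_phi hμ1 ha0 hw)
    · exact lt_of_le_of_lt (phi_le_clamp hμ1 ha0 hab hw) hb'U
  refine ⟨⟨lt_trans ha0 haa', ha'θ, hb'θ, ?_, ?_⟩, haa', hb'b, htrap⟩
  · -- a' < phi b'
    have hmem : (stepFun μ p).2 ∈ Set.Icc a b :=
      ⟨le_trans haθ.le hb'θ.le, hb'b.le⟩
    exact lt_of_lt_of_le (lt_of_lt_of_le ha'm3 hm3min) (min_le_phi hμ1 ha0 hmem)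
  · -- clamp invariant
    set c' := min (max μ⁻¹ (stepFun μ p).1) (stepFun μ p).2 with hc'
    have ha'b' : (stepFun μ p).1 ≤ (stepFun μ p).2 := le_trans ha'θ.le hb'θ.le
    have hc'mem : c' ∈ Set.Icc a b := by
      constructor
      · exact le_trans haa'.le (le_min (le_trans (le_refl _) (le_max_right μ⁻¹ _)) ha'b')
      · exact le_trans (min_le_right _ _) hb'b.le
    exact lt_of_le_of_lt (phi_le_clamp hμ1 ha0 hab hc'mem) hb'U

end AuxLemmas

/-- Lemma 3.1(d): for `μ ∈ (1,e²)` and any `ε ∈ (0, θ_μ)` there are a strictly increasing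
sequence `α` with `0 < α 0 ≤ ε` and `α_m ↑ θ_μ`, and a strictly decreasing sequence `β`
with `β 0 > 1/e` and `β_m ↓ θ_μ`, such that `φ_μ([α_m, β_m]) ⊆ (α_{m+1}, β_{m+1})` for all `m`.
(The sequence index `m` here starts at `0`, playing the role of the paper's `m = 1`.) -/
theorem trapping_sequences (μ : ℝ) (hμ : μ ∈ Set.Ioo 1 (Real.exp 2))
    (ε : ℝ) (hε : ε ∈ Set.Ioo 0 (theta μ)) :
    ∃ α β : ℕ → ℝ,
      StrictMono α ∧ 0 < α 0 ∧ α 0 ≤ ε ∧ Tendsto α atTop (nhds (theta μ)) ∧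
      StrictAnti β ∧ 1 / Real.exp 1 < β 0 ∧ Tendsto β atTop (nhds (theta μ)) ∧
      ∀ m : ℕ, ∀ w ∈ Set.Icc (α m) (β m), phi μ w ∈ Set.Ioo (α (m + 1)) (β (m + 1)) := by
  obtain ⟨hμ1, hμ2⟩ := hμ
  obtain ⟨hε0, hεθ⟩ := hε
  have hμ0 : (0:ℝ) < μ := lt_trans one_pos hμ1
  have hθ0 : 0 < theta μ := div_pos (Real.log_pos hμ1) hμ0
  have hθ1 : theta μ < 1 := by
    rw [theta, div_lt_one hμ0]
    have := Real.log_lt_sub_one_of_pos hμ0 hμ1.ne'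
    linarith
  set θ := theta μ with hθdef
  set b0 : ℝ := θ + 1 with hb0def
  have hb0θ : θ < b0 := by rw [hb0def]; linarith
  have hb0pos : 0 < b0 := lt_trans hθ0 hb0θ
  have hphib0pos : 0 < phi μ b0 := phi_pos hμ1 hb0pos
  set a0 : ℝ := min ε (phi μ b0 / 2) with ha0def
  have ha0pos : 0 < a0 := lt_min hε0 (by linarith)
  have ha0ε : a0 ≤ ε := min_le_left _ _
  have ha0θ : a0 < θ := lt_of_le_of_lt ha0ε hεθ
  have ha0phib0 : a0 < phi μ b0 := lt_of_le_of_lt (min_le_right _ _) (by linarith)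
  -- initial invariant
  have hInv0 : TrapInv μ (a0, b0) := by
    refine ⟨ha0pos, ha0θ, hb0θ, ha0phib0, ?_⟩
    set c0 : ℝ := min (max μ⁻¹ a0) b0 with hc0def
    have hc0pos : 0 < c0 :=
      lt_min (lt_of_lt_of_le ha0pos (le_max_right μ⁻¹ a0)) hb0pos
    have hc0b0 : c0 ≤ b0 := min_le_right _ _
    rcases lt_trichotomy c0 θ with h | h | h
    · have := phi_lt_reflect hμ1 hμ2 hc0pos h
      simp only [hb0def]; linarith
    · rw [h, phi_theta hμ1]; exact hb0θ
    · exact lt_of_lt_of_le (phi_lt hμ1 hθ0 h) hc0b0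
  -- the sequence of pairs
  set f : ℕ → ℝ × ℝ := fun n => (stepFun μ)^[n] (a0, b0) with hfdef
  have hsucc : ∀ n, f (n + 1) = stepFun μ (f n) := by
    intro n
    simp only [hfdef, Function.iterate_succ_apply']
  have hInv : ∀ n, TrapInv μ (f n) := by
    intro n
    induction n with
    | zero => exact hInv0
    | succ k ih => rw [hsucc k]; exact (step_lemma hμ1 ih).1
  set α : ℕ → ℝ := fun n => (f n).1 with hαdef
  set β : ℕ → ℝ := fun n => (f n).2 with hβdef
  have hα0 : α 0 = a0 := rfl
  have hβ0 : β 0 = b0 := rfl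
  have hmono : StrictMono α := by
    apply strictMono_nat_of_lt_succ
    intro n
    have := (step_lemma hμ1 (hInv n)).2.1
    rw [← hsucc n] at this
    exact this
  have hanti : StrictAnti β := by
    apply strictAnti_nat_of_succ_lt
    intro n
    have := (step_lemma hμ1 (hInv n)).2.2.1
    rw [← hsucc n] at this
    exact this
  have htrap : ∀ m : ℕ, ∀ w ∈ Set.Icc (α m) (β m),
      phi μ w ∈ Set.Ioo (α (m + 1)) (β (m + 1)) := by
    intro m w hw
    have := (step_lemma hμ1 (hInv m)).2.2.2 w hw
    rw [← hsucc m] at this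
    exact this
  have hαθ : ∀ n, α n < θ := fun n => (hInv n).2.1
  have hθβ : ∀ n, θ < β n := fun n => (hInv n).2.2.1
  -- limits
  have hbddα : BddAbove (Set.range α) := by
    refine ⟨θ, ?_⟩
    rintro x ⟨n, rfl⟩
    exact (hαθ n).le
  have hbddβ : BddBelow (Set.range β) := by
    refine ⟨θ, ?_⟩
    rintro x ⟨n, rfl⟩
    exact (hθβ n).le
  set A : ℝ := ⨆ n, α n with hAdef
  set B : ℝ := ⨅ n, β n with hBdef
  have hαlim : Tendsto α atTop (nhds A) := tendsto_atTop_ciSup hmono.monotone hbddα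
  have hβlim : Tendsto β atTop (nhds B) := tendsto_atTop_ciInf hanti.antitone hbddβ
  have hAθ : A ≤ θ := ciSup_le fun n => (hαθ n).le
  have hθB : θ ≤ B := le_ciInf fun n => (hθβ n).le
  have hA0 : 0 < A := lt_of_lt_of_le ha0pos (by rw [← hα0]; exact le_ciSup hbddα 0)
  have hAB : A ≤ B := le_trans hAθ hθB
  have hcont : Continuous (phi μ) := by
    unfold phi
    fun_prop
  -- limit equation for α
  have hαlim' : Tendsto (fun n => α (n + 1)) atTop (nhds A) :=
    hαlim.comp (tendsto_add_atTop_nat 1)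
  have hαrec : ∀ n, α (n + 1) = (α n + min (min (phi μ (α n)) (phi μ (β n))) θ) / 2 := by
    intro n
    show (f (n + 1)).1 = _
    rw [hsucc n]
    rfl
  have hαlim'' : Tendsto (fun n => (α n + min (min (phi μ (α n)) (phi μ (β n))) θ) / 2)
      atTop (nhds ((A + min (min (phi μ A) (phi μ B)) θ) / 2)) := by
    apply Tendsto.div_const
    exact hαlim.add (((hcont.tendsto A).comp hαlim).min ((hcont.tendsto B).comp hβlim) |>.min
      tendsto_const_nhds)
  have EA : min (min (phi μ A) (phi μ B)) θ = A := by
    have h1 : Tendsto (fun n => α (n + 1)) atTop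
        (nhds ((A + min (min (phi μ A) (phi μ B)) θ) / 2)) := by
      simpa only [← hαrec] using hαlim''
    have := tendsto_nhds_unique hαlim' h1
    linarith
  -- limit equation for β
  have hβlim' : Tendsto (fun n => β (n + 1)) atTop (nhds B) :=
    hβlim.comp (tendsto_add_atTop_nat 1)
  have hβrec : ∀ n, β (n + 1) = (β n + max (phi μ (min (max μ⁻¹ (α n)) (β n))) θ) / 2 := by
    intro n
    show (f (n + 1)).2 = _
    rw [hsucc n]
    rfl
  have hβlim'' : Tendsto (fun n => (β n + max (phi μ (min (max μ⁻¹ (α n)) (β n))) θ) / 2)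
      atTop (nhds ((B + max (phi μ (min (max μ⁻¹ A) B)) θ) / 2)) := by
    apply Tendsto.div_const
    apply hβlim.add
    apply Tendsto.max _ tendsto_const_nhds
    exact (hcont.tendsto _).comp ((tendsto_const_nhds.max hαlim).min hβlim)
  have EB : max (phi μ (min (max μ⁻¹ A) B)) θ = B := by
    have h1 : Tendsto (fun n => β (n + 1)) atTop
        (nhds ((B + max (phi μ (min (max μ⁻¹ A) B)) θ) / 2)) := by
      simpa only [← hβrec] using hβlim''
    have := tendsto_nhds_unique hβlim' h1
    linarith
  -- B = θ
  have hBθ : B = θ := by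
    rcases eq_or_lt_of_le hθB with h | hB
    · exact h.symm
    · exfalso
      set c : ℝ := min (max μ⁻¹ A) B with hcdef
      have hAc : A ≤ c := le_min (le_max_right μ⁻¹ A) hAB
      have hcB : c ≤ B := min_le_right _ _
      have hc0 : 0 < c := lt_of_lt_of_le hA0 hAc
      have hφc : phi μ c = B := by
        rcases le_or_gt (phi μ c) θ with h | h
        · rw [max_eq_right h] at EB; linarith
        · rw [max_eq_left h.le] at EB; exact EB
      rcases lt_trichotomy c θ with hcθ | hcθ | hcθ
      · have hrefl := phi_lt_reflect hμ1 hμ2 hc0 hcθ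
        have hBA : B - θ < θ - A := by linarith
        have hAθ' : A < θ := by linarith
        have hφA : A < phi μ A := lt_phi hμ1 hA0 hAθ'
        have hAeq : A = phi μ B := by
          rcases le_or_gt (min (phi μ A) (phi μ B)) θ with h1 | h1
          · rw [min_eq_left h1] at EA
            rcases le_total (phi μ A) (phi μ B) with h2 | h2
            · rw [min_eq_left h2] at EA; linarith
            · rw [min_eq_right h2] at EA; exact EA.symm
          · rw [min_eq_right h1.le] at EA; linarith
        have := reflect_lt_phi hμ1 hμ2 hθ0 hB
        rw [← hAeq] at this
        linarith
      · rw [hcθ, phi_theta hμ1] at hφc; linarith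
      · have := phi_lt hμ1 hθ0 hcθ
        linarith
  -- A = θ
  have hAθeq : A = θ := by
    rcases eq_or_lt_of_le hAθ with h | hA
    · exact h
    · exfalso
      have hφA : A < phi μ A := lt_phi hμ1 hA0 hA
      rw [hBθ, phi_theta hμ1] at EA
      rcases le_total (phi μ A) θ with h1 | h1
      · rw [min_eq_left (min_le_of_left_le h1 : min (phi μ A) θ ≤ θ),
          min_eq_left h1] at EA
        linarith
      · rw [min_eq_right h1, min_self] at EA
        linarith
  refine ⟨α, β, hmono, ?_, ?_, ?_, hanti, ?_, ?_, htrap⟩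
  · rw [hα0]; exact ha0pos
  · rw [hα0]; exact ha0ε
  · rw [← hAθeq]; exact hαlim
  · rw [hβ0, hb0def]
    have h2 : (2:ℝ) ≤ Real.exp 1 := by
      have := Real.add_one_le_exp (1:ℝ); linarith
    have : 1 / Real.exp 1 ≤ 1 / 2 := by
      apply div_le_div_of_nonneg_left _ _ h2 <;> norm_num
    linarith
  · rw [← hBθ]; exact hβlim
end

section
/- Deterministic confinement of a drift–martingale decomposition (proved in Section 5): Let d ≥ 1, L_s > 0 a real number, L_t ∈ ℕ with L_t ≥ 1, z ∈ ℝ^d, and let (x_k)_{k=0}^{L_t} be points in ℝ^d with x_0 = z and x_k − x_{k−1} = D_k + Y_k for k = 1,…,L_t. Assume: (a) max_{1≤k≤L_t} ‖Σ_{i=1}^{k} Y_i‖ < L_s/8; and (b) for every k ∈ {1,…,L_t}, if ‖x_{k−1} − z‖ ≤ L_s/2 then ‖D_k‖ < L_s/(8 L_t). Then ‖x_k − z‖ ≤ L_s/4 for all k ∈ {0,…,L_t}; in particular Σ_{i=1}^{k} ‖D_i‖ < L_s/8 for all k ≤ L_t. -/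
/-- Deterministic confinement of a drift–martingale decomposition (Section 5).
`‖·‖` is the sup-norm on `ℝ^d` (the norm of the Pi type `Fin d → ℝ`). -/
theorem drift_martingale_confinement
    (d : ℕ) (hd : 1 ≤ d) (Ls : ℝ) (hLs : 0 < Ls) (Lt : ℕ) (hLt : 1 ≤ Lt)
    (z : Fin d → ℝ) (x D Y : ℕ → Fin d → ℝ)
    (hx0 : x 0 = z)
    (hstep : ∀ k, 1 ≤ k → k ≤ Lt → x k - x (k - 1) = D k + Y k)
    (hmart : ∀ k, 1 ≤ k → k ≤ Lt → ‖∑ i ∈ Finset.Icc 1 k, Y i‖ < Ls / 8)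
    (hdrift : ∀ k, 1 ≤ k → k ≤ Lt → ‖x (k - 1) - z‖ ≤ Ls / 2 → ‖D k‖ < Ls / (8 * Lt)) :
    (∀ k ≤ Lt, ‖x k - z‖ ≤ Ls / 4) ∧
    (∀ k ≤ Lt, ∑ i ∈ Finset.Icc 1 k, ‖D i‖ < Ls / 8) := by
  set c : ℝ := Ls / (8 * Lt) with hc
  have hLt0 : (0:ℝ) < Lt := by exact_mod_cast hLt
  have hc0 : 0 < c := by rw [hc]; positivity
  have hLtc : (Lt : ℝ) * c = Ls / 8 := by
    rw [hc]; field_simp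
  have key : ∀ k, k ≤ Lt →
      x k - z = (∑ i ∈ Finset.Icc 1 k, D i) + (∑ i ∈ Finset.Icc 1 k, Y i) ∧
      (∑ i ∈ Finset.Icc 1 k, ‖D i‖) ≤ k * c ∧
      (1 ≤ k → (∑ i ∈ Finset.Icc 1 k, ‖D i‖) < k * c) ∧
      ‖x k - z‖ ≤ Ls / 4 := by
    intro k
    induction k with
    | zero =>
      intro _
      refine ⟨by simp [hx0], by simp, by omega, ?_⟩
      simp [hx0]
      positivity
    | succ n ih =>
      intro hk
      have hn : n ≤ Lt := Nat.le_of_succ_le hk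
      obtain ⟨hdecomp, hsum, _, hbound⟩ := ih hn
      have h1 : 1 ≤ n + 1 := Nat.le_add_left 1 n
      have hDk : ‖D (n+1)‖ < c := by
        have := hdrift (n+1) h1 hk (by
          simpa using hbound.trans (by linarith))
        simpa [hc] using this
      have hnot : (n+1) ∉ Finset.Icc 1 n := by simp
      have hIcc : Finset.Icc 1 (n+1) = insert (n+1) (Finset.Icc 1 n) := by
        exact (Finset.insert_Icc_right_eq_Icc_add_one h1).symm
      have hxs : x (n+1) - x n = D (n+1) + Y (n+1) := by
        simpa using hstep (n+1) h1 hk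
      have hdec : x (n+1) - z
          = (∑ i ∈ Finset.Icc 1 (n+1), D i) + (∑ i ∈ Finset.Icc 1 (n+1), Y i) := by
        rw [hIcc, Finset.sum_insert hnot, Finset.sum_insert hnot]
        have : x (n+1) - z = (x (n+1) - x n) + (x n - z) := by abel
        rw [this, hxs, hdecomp]; abel
      have hsumD : (∑ i ∈ Finset.Icc 1 (n+1), ‖D i‖) < (n+1 : ℕ) * c := by
        rw [hIcc, Finset.sum_insert hnot]
        push_cast
        nlinarith
      refine ⟨hdec, le_of_lt hsumD, fun _ => hsumD, ?_⟩
      have hnormD : ‖∑ i ∈ Finset.Icc 1 (n+1), D i‖ ≤ ∑ i ∈ Finset.Icc 1 (n+1), ‖D i‖ :=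
        norm_sum_le _ _
      have hY : ‖∑ i ∈ Finset.Icc 1 (n+1), Y i‖ < Ls / 8 := hmart (n+1) h1 hk
      have hk' : ((n:ℝ)+1) * c ≤ (Lt:ℝ) * c := by
        have : ((n:ℝ)+1) ≤ (Lt:ℝ) := by exact_mod_cast hk
        nlinarith
      calc ‖x (n+1) - z‖ ≤ ‖∑ i ∈ Finset.Icc 1 (n+1), D i‖
              + ‖∑ i ∈ Finset.Icc 1 (n+1), Y i‖ := by rw [hdec]; exact norm_add_le _ _
        _ ≤ Ls / 4 := by push_cast at hsumD; rw [hLtc] at hk'; linarith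
  constructor
  · intro k hk; exact (key k hk).2.2.2
  · intro k hk
    rcases Nat.eq_zero_or_pos k with rfl | hk1
    · simp; positivity
    · have h := (key k hk).2.2.1 hk1
      have : (k:ℝ) * c ≤ (Lt:ℝ) * c := by
        have : (k:ℝ) ≤ (Lt:ℝ) := by exact_mod_cast hk
        nlinarith
      rw [hLtc] at this; linarith
end
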